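/- Let (v_1,…,v_d) be a Popescu system on K with M = {v_k, v_k* : 1 ≤ k ≤ d}'' satisfying M' = {x ∈ B(K) : Σ_{k=1}^d v_k x v_k* = x}, and let (H, P, (S_1,…,S_d)) be a minimal Popescu dilation of (v_1,…,v_d). If Ω ∈ K is a unit vector cyclic for M in K (i.e. the closure of MΩ equals K), then Ω is cyclic for the Cuntz family in H: the linear span of {S_I S_J* Ω : I, J finite multi-indices} is dense in H. -/

import Mathlib

open ContinuousLinearMap Filter
open scoped ComplexInnerProductSpace ComplexOrder

noncomputable section

/-- The operator `S_I = S_{i₁} ⋯ S_{i_m}` associated to a finite multi-index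
(the empty multi-index gives the identity). -/
def cword {d : ℕ} {H : Type*} [NormedAddCommGroup H] [InnerProductSpace ℂ H]
    (S : Fin d → H →L[ℂ] H) (I : List (Fin d)) : H →L[ℂ] H :=
  (I.map S).prod

/-- A Cuntz family: `Sᵢ* Sⱼ = δᵢⱼ 1` and `∑ₖ Sₖ Sₖ* = 1`. -/
def IsCuntzFamily {d : ℕ} {H : Type*} [NormedAddCommGroup H] [InnerProductSpace ℂ H]
    [CompleteSpace H] (S : Fin d → H →L[ℂ] H) : Prop :=
  (∀ i j : Fin d, adjoint (S i) ∘L S j = if i = j then 1 else 0) ∧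
    ∑ k : Fin d, S k ∘L adjoint (S k) = 1

/-- A Popescu system: `∑ₖ vₖ vₖ* = 1`. -/
def IsPopescuSystem {d : ℕ} {K : Type*} [NormedAddCommGroup K] [InnerProductSpace ℂ K]
    [CompleteSpace K] (v : Fin d → K →L[ℂ] K) : Prop :=
  ∑ k : Fin d, v k ∘L adjoint (v k) = 1

/-- A minimal Popescu dilation of a Popescu system `v` on `K`: `H` contains `K` as a closed
subspace via the isometric embedding `ι` (so `P = ι ∘ ι*` is the orthogonal projection of `H`
onto the copy of `K`), `S` is a Cuntz family leaving the copy of `K` invariant under every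
`Sₖ*` (`P Sₖ* P = Sₖ* P`), the compression of `Sₖ` to `K` is `vₖ`, and the vectors
`S_I ξ`, `ξ ∈ K`, are total in `H`. -/
def IsMinimalDilation {d : ℕ} {K H : Type*}
    [NormedAddCommGroup K] [InnerProductSpace ℂ K] [CompleteSpace K]
    [NormedAddCommGroup H] [InnerProductSpace ℂ H] [CompleteSpace H]
    (v : Fin d → K →L[ℂ] K) (ι : K →L[ℂ] H) (S : Fin d → H →L[ℂ] H) : Prop :=
  IsCuntzFamily S ∧
  adjoint ι ∘L ι = 1 ∧
  (∀ k, (ι ∘L adjoint ι) ∘L adjoint (S k) ∘L (ι ∘L adjoint ι) = adjoint (S k) ∘L (ι ∘L adjoint ι)) ∧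
  (∀ k, adjoint ι ∘L S k ∘L ι = v k) ∧
  Dense ((Submodule.span ℂ {x : H | ∃ (I : List (Fin d)) (ξ : K), x = cword S I (ι ξ)} :
    Submodule ℂ H) : Set H)

/-! The closed span `N` of the vectors `S_I S_J* ιΩ` reduces the Cuntz family, so its projection
`Q` commutes with every `Sₖ`; together with `Sₖ* ι = ι vₖ*` and `∑ₖ Sₖ Sₖ* = 1` this makes
`x = ι* Q ι` a fixed point of `x ↦ ∑ₖ vₖ x vₖ*`, i.e. `x ∈ M'`. As `x Ω = Ω` and `Ω` is cyclic for
`M`, `x = 1`, so `ι K ⊆ N`; minimality of the dilation then forces `N = H`. -/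

section Words

variable {d : ℕ} {E : Type*} [NormedAddCommGroup E] [InnerProductSpace ℂ E]

@[simp]
lemma cword_nil (S : Fin d → E →L[ℂ] E) : cword S [] = 1 := rfl

lemma cword_cons (S : Fin d → E →L[ℂ] E) (i : Fin d) (I : List (Fin d)) :
    cword S (i :: I) = S i ∘L cword S I := by
  simp [cword, mul_def]

lemma cword_append (S : Fin d → E →L[ℂ] E) (I J : List (Fin d)) :
    cword S (I ++ J) = cword S I ∘L cword S J := by
  simp [cword, mul_def]

@[simp]
lemma cword_singleton (S : Fin d → E →L[ℂ] E) (k : Fin d) : cword S [k] = S k := by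
  simp [cword]

lemma cword_mem_of_forall_mem_invtSubmodule {S : Fin d → E →L[ℂ] E} {N : Submodule ℂ E}
    (hN : ∀ k, N ∈ Module.End.invtSubmodule (S k)) (I : List (Fin d)) {x : E} (hx : x ∈ N) :
    cword S I x ∈ N := by
  induction I with
  | nil => simpa using hx
  | cons i I ih => simpa [cword_cons] using hN i ih

end Words

section Hilbert

variable {𝕜 E F : Type*} [RCLike 𝕜] [NormedAddCommGroup E] [InnerProductSpace 𝕜 E]
  [NormedAddCommGroup F] [InnerProductSpace 𝕜 F]

lemma Submodule.topologicalClosure_span_mem_invtSubmodule {s : Set E} {T : E →L[𝕜] E}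
    (h : ∀ x ∈ s, T x ∈ span 𝕜 s) :
    (span 𝕜 s).topologicalClosure ∈ Module.End.invtSubmodule T := by
  have hspan : Set.MapsTo T (span 𝕜 s) (span 𝕜 s) :=
    (span_le (p := (span 𝕜 s).comap (T : E →ₗ[𝕜] E))).2 h
  simpa [Module.End.mem_invtSubmodule_iff_mapsTo, topologicalClosure_coe] using
    hspan.closure T.continuous

variable [CompleteSpace E]

lemma Submodule.commute_starProjection {N : Submodule 𝕜 E} [N.HasOrthogonalProjection]
    {T : E →L[𝕜] E} (hT : N ∈ Module.End.invtSubmodule T)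
    (hT' : N ∈ Module.End.invtSubmodule (adjoint T)) : Commute N.starProjection T :=
  (N.isIdempotentElem_starProjection.commute_iff).2
    ⟨by simpa using hT, by simpa using ContinuousLinearMap.mem_invtSubmodule_adjoint_iff.1 hT'⟩

variable [CompleteSpace F]

/-- `(P_{Nᗮ} A)* (P_{Nᗮ} A) = A* A - A* P_N A = 0`. -/
lemma Submodule.range_le_of_adjoint_comp_starProjection_comp_eq {N : Submodule 𝕜 E}
    [N.HasOrthogonalProjection] {A : F →L[𝕜] E}
    (h : adjoint A ∘L N.starProjection ∘L A = adjoint A ∘L A) : A.range ≤ N := by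
  have hP : IsStarProjection Nᗮ.starProjection := isStarProjection_starProjection
  have hzero : Nᗮ.starProjection ∘L A = 0 := by
    rw [← adjoint_comp_self_eq_zero_iff, adjoint_comp, comp_assoc, ← comp_assoc _ _ A,
      ← star_eq_adjoint, hP.isSelfAdjoint.star_eq, ← ContinuousLinearMap.mul_def,
      hP.isIdempotentElem.eq, starProjection_orthogonal, sub_comp, comp_sub, h, id_comp, sub_self]
  rintro _ ⟨ξ, rfl⟩
  rw [← N.orthogonal_orthogonal, ← orthogonalProjectionOnto_eq_zero_iff]
  exact Subtype.ext (by simpa using congr($hzero ξ))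

end Hilbert

lemma ContinuousLinearMap.eq_one_of_mem_centralizer {R E : Type*} [Semiring R]
    [TopologicalSpace E] [T2Space E] [AddCommMonoid E] [Module R E] {M : Set (E →L[R] E)}
    {Ω : E} (hΩ : Dense {ξ : E | ∃ m ∈ M, ξ = m Ω}) {x : E →L[R] E}
    (hx : x ∈ Set.centralizer M) (hxΩ : x Ω = Ω) : x = 1 := by
  have hfix : Set.EqOn x id {ξ : E | ∃ m ∈ M, ξ = m Ω} := by
    rintro _ ⟨m, hm, rfl⟩
    simpa [hxΩ] using congr($(hx m hm) Ω).symm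
  ext ξ
  exact congrFun (Continuous.ext_on hΩ x.continuous continuous_id hfix) ξ

section Cuntz

variable {d : ℕ} {H : Type*} [NormedAddCommGroup H] [InnerProductSpace ℂ H] [CompleteSpace H]

def cuntzCyclicSpan (S : Fin d → H →L[ℂ] H) (ω : H) : Submodule ℂ H :=
  Submodule.span ℂ {x : H | ∃ I J : List (Fin d), x = cword S I (adjoint (cword S J) ω)}

lemma self_mem_cuntzCyclicSpan (S : Fin d → H →L[ℂ] H) (ω : H) : ω ∈ cuntzCyclicSpan S ω :=
  Submodule.subset_span ⟨[], [], by simp [← star_eq_adjoint]⟩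

lemma topologicalClosure_cuntzCyclicSpan_mem_invtSubmodule (S : Fin d → H →L[ℂ] H) (ω : H)
    (k : Fin d) : (cuntzCyclicSpan S ω).topologicalClosure ∈ Module.End.invtSubmodule (S k) := by
  refine Submodule.topologicalClosure_span_mem_invtSubmodule ?_
  rintro _ ⟨I, J, rfl⟩
  exact Submodule.subset_span ⟨k :: I, J, by simp [cword_cons]⟩

lemma IsCuntzFamily.topologicalClosure_cuntzCyclicSpan_mem_invtSubmodule_adjoint
    {S : Fin d → H →L[ℂ] H} (hS : IsCuntzFamily S) (ω : H) (k : Fin d) :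
    (cuntzCyclicSpan S ω).topologicalClosure ∈ Module.End.invtSubmodule (adjoint (S k)) := by
  refine Submodule.topologicalClosure_span_mem_invtSubmodule ?_
  rintro _ ⟨I, J, rfl⟩
  cases I with
  | nil =>
    exact Submodule.subset_span ⟨[], J ++ [k], by simp [cword_append]⟩
  | cons i I =>
    have hki := congr($(hS.1 k i) (cword S I (adjoint (cword S J) ω)))
    simp only [comp_apply] at hki
    rw [cword_cons, comp_apply, hki]
    split_ifs
    · exact Submodule.subset_span ⟨I, J, rfl⟩
    · exact Submodule.zero_mem _

end Cuntz

namespace IsMinimalDilation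

variable {d : ℕ} {K H : Type*}
  [NormedAddCommGroup K] [InnerProductSpace ℂ K] [CompleteSpace K]
  [NormedAddCommGroup H] [InnerProductSpace ℂ H] [CompleteSpace H]
  {v : Fin d → K →L[ℂ] K} {ι : K →L[ℂ] H} {S : Fin d → H →L[ℂ] H}

lemma adjoint_cuntz_comp_eq (hdil : IsMinimalDilation v ι S) (k : Fin d) :
    adjoint (S k) ∘L ι = ι ∘L adjoint (v k) := by
  obtain ⟨-, hι, hinv, hcomp, -⟩ := hdil
  have h := congr($(hinv k) ∘L ι)
  simp only [comp_assoc, hι, one_def, comp_id] at h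
  rw [← hcomp k, ← h]
  simp only [adjoint_comp, adjoint_adjoint, comp_assoc]

lemma adjoint_comp_cuntz_eq (hdil : IsMinimalDilation v ι S) (k : Fin d) :
    adjoint ι ∘L S k = v k ∘L adjoint ι := by
  simpa using congr(adjoint $(hdil.adjoint_cuntz_comp_eq k))

lemma sum_comp_compression_comp_adjoint_eq (hdil : IsMinimalDilation v ι S) {Q : H →L[ℂ] H}
    (hQ : ∀ k, Commute Q (S k)) :
    ∑ k, v k ∘L (adjoint ι ∘L Q ∘L ι) ∘L adjoint (v k) = adjoint ι ∘L Q ∘L ι := by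
  have hterm (k : Fin d) : v k ∘L (adjoint ι ∘L Q ∘L ι) ∘L adjoint (v k)
      = adjoint ι ∘L Q ∘L (S k ∘L adjoint (S k)) ∘L ι := by
    calc v k ∘L (adjoint ι ∘L Q ∘L ι) ∘L adjoint (v k)
        = (v k ∘L adjoint ι) ∘L Q ∘L (ι ∘L adjoint (v k)) := by simp only [comp_assoc]
      _ = adjoint ι ∘L (S k * Q) ∘L (adjoint (S k) ∘L ι) := by
        rw [← hdil.adjoint_cuntz_comp_eq, ← hdil.adjoint_comp_cuntz_eq]
        simp only [comp_assoc, mul_def]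
      _ = adjoint ι ∘L Q ∘L (S k ∘L adjoint (S k)) ∘L ι := by
        rw [← (hQ k).eq]
        simp only [comp_assoc, mul_def]
  simp only [hterm, ← comp_finsetSum, ← finsetSum_comp, hdil.1.2, one_def, id_comp]

lemma eq_top_of_range_le (hdil : IsMinimalDilation v ι S) {N : Submodule ℂ H}
    (hN : IsClosed (N : Set H)) (hS : ∀ k, N ∈ Module.End.invtSubmodule (S k))
    (hι : ι.range ≤ N) : N = ⊤ := by
  obtain ⟨-, -, -, -, hdense⟩ := hdil
  have hspan : Submodule.span ℂ {x : H | ∃ (I : List (Fin d)) (ξ : K), x = cword S I (ι ξ)}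
      ≤ N := by
    rw [Submodule.span_le]
    rintro _ ⟨I, ξ, rfl⟩
    exact cword_mem_of_forall_mem_invtSubmodule hS I (hι ⟨ξ, rfl⟩)
  rw [← SetLike.coe_set_eq, Submodule.top_coe, ← hN.closure_eq]
  exact (hdense.mono hspan).closure_eq

end IsMinimalDilation

theorem cyclic_for_cuntz_of_cyclic_for_M_general {d : ℕ}
    {K H : Type*} [NormedAddCommGroup K] [InnerProductSpace ℂ K] [CompleteSpace K]
    [NormedAddCommGroup H] [InnerProductSpace ℂ H] [CompleteSpace H]
    (v : Fin d → K →L[ℂ] K)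
    (M : Set (K →L[ℂ] K))
    (hMcomm : Set.centralizer M
        = {x : K →L[ℂ] K | (∑ k : Fin d, v k ∘L x ∘L adjoint (v k)) = x})
    (ι : K →L[ℂ] H) (S : Fin d → H →L[ℂ] H) (hdil : IsMinimalDilation v ι S)
    (Ω : K)
    (hcycM : Dense {ξ : K | ∃ m ∈ M, ξ = m Ω}) :
    Dense ((Submodule.span ℂ
        {x : H | ∃ I J : List (Fin d), x = cword S I (adjoint (cword S J) (ι Ω))} :
        Submodule ℂ H) : Set H) := by
  set N := (cuntzCyclicSpan S (ι Ω)).topologicalClosure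
  have hS k := topologicalClosure_cuntzCyclicSpan_mem_invtSubmodule S (ι Ω) k
  have hcomm k : Commute N.starProjection (S k) := Submodule.commute_starProjection (hS k)
    (hdil.1.topologicalClosure_cuntzCyclicSpan_mem_invtSubmodule_adjoint (ι Ω) k)
  have hx : adjoint ι ∘L N.starProjection ∘L ι ∈ Set.centralizer M := by
    rw [hMcomm]
    exact hdil.sum_comp_compression_comp_adjoint_eq hcomm
  have hιΩ : ι Ω ∈ N := Submodule.le_topologicalClosure _ (self_mem_cuntzCyclicSpan S (ι Ω))
  have hxΩ : (adjoint ι ∘L N.starProjection ∘L ι) Ω = Ω := by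
    simpa [Submodule.starProjection_eq_self_iff.2 hιΩ] using congr($(hdil.2.1) Ω)
  have hx1 := ContinuousLinearMap.eq_one_of_mem_centralizer hcycM hx hxΩ
  have hrange : ι.range ≤ N :=
    Submodule.range_le_of_adjoint_comp_starProjection_comp_eq (by rw [hx1, hdil.2.1])
  rw [Submodule.dense_iff_topologicalClosure_eq_top]
  exact hdil.eq_top_of_range_le (Submodule.isClosed_topologicalClosure _) hS hrange

/-- If the Popescu system `v` on `K` satisfies
`M' = {x : ∑ₖ vₖ x vₖ* = x}` for `M = {vₖ, vₖ*}''`, and `Ω ∈ K` is a unit vector cyclic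
for `M` in `K`, then in any minimal Popescu dilation `(H, ι, S)` the vector `ι Ω` is cyclic
for the Cuntz family: the span of `{S_I S_J* (ι Ω)}` is dense in `H`. -/
theorem cyclic_for_cuntz_of_cyclic_for_M {d : ℕ} (hd : 2 ≤ d)
    {K H : Type*} [NormedAddCommGroup K] [InnerProductSpace ℂ K] [CompleteSpace K]
    [NormedAddCommGroup H] [InnerProductSpace ℂ H] [CompleteSpace H]
    (v : Fin d → K →L[ℂ] K) (hv : IsPopescuSystem v)
    (M : Set (K →L[ℂ] K))
    (hM : M = Set.centralizer (Set.centralizer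
        (Set.range v ∪ Set.range (fun k => adjoint (v k)))))
    (hMcomm : Set.centralizer M
        = {x : K →L[ℂ] K | (∑ k : Fin d, v k ∘L x ∘L adjoint (v k)) = x})
    (ι : K →L[ℂ] H) (S : Fin d → H →L[ℂ] H) (hdil : IsMinimalDilation v ι S)
    (Ω : K) (hΩ : ‖Ω‖ = 1)
    (hcycM : Dense {ξ : K | ∃ m ∈ M, ξ = m Ω}) :
    Dense ((Submodule.span ℂ
        {x : H | ∃ I J : List (Fin d), x = cword S I (adjoint (cword S J) (ι Ω))} :
        Submodule ℂ H) : Set H) :=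
  cyclic_for_cuntz_of_cyclic_for_M_general v M hMcomm ι S hdil Ω hcycM
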